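/- arXiv:1812.08080 — 2 statements merged into one kernel-verified Lean document; each statement's English description precedes it below -/
import Mathlib

section
/- Let p be an odd prime with p ≡ 3 (mod 4), and let i be an integer. Then Σ_{j=0}^{p-1} (j/p)·((i²+3ij+2j²)/p) = 0. -/
/-!
Write `χ` for the quadratic character of `ZMod p`. By multiplicativity the summand is
`χ (j (i + j) (i + 2j))`, and the substitution `j ↦ -i - j` negates the cubic
`j (i + j) (i + 2j)`. Since `p ≡ 3 (mod 4)`, `-1` is not a square mod `p`, so `χ (-1) = -1`
and the sum equals its own negative.
-/

theorem Fintype.sum_eq_zero_of_comp_equiv_eq_neg {α M : Type*} [Fintype α] [AddCommGroup M]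
    [IsAddTorsionFree M] (g : α → M) (e : α ≃ α) (h : ∀ x, g (e x) = -g x) :
    ∑ x, g x = 0 := by
  have hneg : -∑ x, g x = ∑ x, g x := by
    rw [← Finset.sum_neg_distrib, ← e.sum_comp g]
    simp only [h]
  exact neg_eq_self.mp hneg

theorem MulChar.sum_comp_eq_zero_of_map_neg_one {R R' : Type*} [CommRing R] [Fintype R]
    [CommRing R'] [IsAddTorsionFree R'] (χ : MulChar R R') (hχ : χ (-1) = -1)
    (f : R → R) (e : R ≃ R) (hf : ∀ x, f (e x) = -f x) :
    ∑ x, χ (f x) = 0 :=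
  Fintype.sum_eq_zero_of_comp_equiv_eq_neg _ e fun x => by
    rw [hf, neg_eq_neg_one_mul, map_mul, hχ, neg_one_mul]

theorem quadraticChar_zmod_neg_one_of_mod_four_eq_three {p : ℕ} [Fact p.Prime]
    (hp : p % 4 = 3) : quadraticChar (ZMod p) (-1) = -1 :=
  quadraticChar_neg_one_iff_not_isSquare.mpr fun h =>
    ZMod.exists_sq_eq_neg_one_iff.mp h hp

theorem ZMod.sum_range_natCast {p : ℕ} [NeZero p] {M : Type*} [AddCommMonoid M]
    (f : ZMod p → M) : ∑ j ∈ Finset.range p, f (j : ZMod p) = ∑ x : ZMod p, f x := by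
  refine Finset.sum_nbij' (fun j => (j : ZMod p)) (fun x => x.val) ?_ ?_ ?_ ?_ ?_
  · intro j _; exact Finset.mem_univ _
  · intro x _; exact Finset.mem_range.mpr x.val_lt
  · intro j hj; exact ZMod.val_cast_of_lt (Finset.mem_range.mp hj)
  · intro x _; exact ZMod.natCast_rightInverse x
  · intro j _; rfl

theorem stmt_3 (p : ℕ) [Fact p.Prime] (hp : p % 4 = 3) (i : ℤ) :
    ∑ j ∈ Finset.range p,
        legendreSym p j * legendreSym p (i ^ 2 + 3 * i * j + 2 * j ^ 2) = 0 := by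
  set a : ZMod p := (i : ZMod p)
  have hsummand : ∀ j : ℕ, legendreSym p j * legendreSym p (i ^ 2 + 3 * i * j + 2 * j ^ 2)
      = quadraticChar (ZMod p) ((j : ZMod p) * (a + j) * (a + 2 * j)) := by
    intro j
    rw [← legendreSym.mul]
    simp only [legendreSym, a]
    push_cast
    congr 1
    ring
  simp_rw [hsummand]
  rw [ZMod.sum_range_natCast fun x => quadraticChar (ZMod p) (x * (a + x) * (a + 2 * x))]
  exact MulChar.sum_comp_eq_zero_of_map_neg_one _
    (quadraticChar_zmod_neg_one_of_mod_four_eq_three hp) _ (Equiv.subLeft (-a))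
    fun x => by simp only [Equiv.subLeft_apply]; ring
end

section
/- Let q be an odd prime power, χ a nontrivial multiplicative character on F_q, and P(x) ∈ F_q[x] of degree n with Σ_{x∈F_q} χ(xP(x)) = 0. If the character χ^{n+1} is nontrivial, then the matrix M₀ = [χ(P*(a,b))]_{a,b∈F_q}, where P*(x,y) is the homogenization of P of degree n, is singular. -/
/-!
The vector `(χ b)_b` lies in the kernel of `M₀`. For row `a = 0` the entry is
`χ (c_n b^n)`, so the row sum is `χ c_n · ∑_b χ^{n+1}(b) = 0`. For `a ≠ 0`,
`P*(a, b) = a^n P(b/a)`, and substituting `b = a t` turns the row sum into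
`χ(a)^{n+1} ∑_t χ(t P(t)) = 0`.
-/

open Finset

namespace Polynomial

variable {F : Type*} [Field F]

/-- `P*(a, b)`, the homogenization of `P` in degree `n`, evaluated at `(a, b)`. -/
def homogenEval (P : F[X]) (n : ℕ) (a b : F) : F :=
  ∑ s ∈ range (n + 1), P.coeff s * a ^ (n - s) * b ^ s

theorem homogenEval_zero_left (P : F[X]) (n : ℕ) (b : F) :
    P.homogenEval n 0 b = P.coeff n * b ^ n := by
  rw [homogenEval, sum_eq_single n]
  · rw [Nat.sub_self, pow_zero, mul_one]
  · intro s hs hsn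
    have hlt : s < n := lt_of_le_of_ne (Nat.lt_succ_iff.mp (mem_range.mp hs)) hsn
    rw [zero_pow (Nat.sub_ne_zero_of_lt hlt), mul_zero, zero_mul]
  · simp

theorem homogenEval_of_ne_zero {P : F[X]} {n : ℕ} (hn : P.natDegree ≤ n) {a : F} (ha : a ≠ 0)
    (b : F) : P.homogenEval n a b = a ^ n * P.eval (a⁻¹ * b) := by
  rw [homogenEval, eval_eq_sum_range' (Nat.lt_succ_of_le hn), mul_sum]
  refine sum_congr rfl fun s hs => ?_
  rw [mul_pow, pow_sub₀ a ha (Nat.lt_succ_iff.mp (mem_range.mp hs)), inv_pow]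
  ring

end Polynomial

namespace MulChar

open Polynomial

variable {F R : Type*} [Field F] [Fintype F] [CommRing R]

theorem sum_homogenEval_zero_left_mul_eq_zero [IsDomain R] (χ : MulChar F R) (P : F[X]) {n : ℕ}
    (hχn : χ ^ (n + 1) ≠ 1) : ∑ b, χ (P.homogenEval n 0 b) * χ b = 0 := by
  have hrow : ∀ b, χ (P.homogenEval n 0 b) * χ b = χ (P.coeff n) * (χ ^ (n + 1)) b := by
    intro b
    rw [homogenEval_zero_left, map_mul, map_pow, pow_apply' χ n.succ_ne_zero, pow_succ]
    ring
  rw [sum_congr rfl fun b _ => hrow b, ← mul_sum, sum_eq_zero_of_ne_one hχn, mul_zero]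

theorem sum_homogenEval_mul_eq (χ : MulChar F R) {P : F[X]} {n : ℕ} (hn : P.natDegree ≤ n)
    {a : F} (ha : a ≠ 0) :
    ∑ b, χ (P.homogenEval n a b) * χ b = χ a ^ (n + 1) * ∑ t, χ (t * P.eval t) := by
  rw [← Equiv.sum_comp (Equiv.mulLeft₀ a ha), mul_sum]
  refine sum_congr rfl fun t _ => ?_
  change χ (P.homogenEval n a (a * t)) * χ (a * t) = _
  rw [homogenEval_of_ne_zero hn ha, inv_mul_cancel_left₀ ha]
  simp only [map_mul, map_pow]
  ring

end MulChar

theorem stmt_11_general (F : Type*) [Field F] [Fintype F] [DecidableEq F]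
    (χ : MulChar F ℂ)
    (P : Polynomial F)
    (hsum : ∑ x : F, χ (x * P.eval x) = 0)
    (hχn : χ ^ (P.natDegree + 1) ≠ 1) :
    Matrix.det (Matrix.of fun a b : F =>
        χ (∑ s ∈ Finset.range (P.natDegree + 1),
            P.coeff s * a ^ (P.natDegree - s) * b ^ s)) = 0 := by
  rw [← Matrix.exists_mulVec_eq_zero_iff]
  refine ⟨fun b => χ b, fun h => by simpa using congrFun h 1, funext fun a => ?_⟩
  change ∑ b, χ (P.homogenEval P.natDegree a b) * χ b = 0
  by_cases ha : a = 0
  · rw [ha]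
    exact χ.sum_homogenEval_zero_left_mul_eq_zero P hχn
  · rw [χ.sum_homogenEval_mul_eq le_rfl ha, hsum, mul_zero]

theorem stmt_11 (F : Type*) [Field F] [Fintype F] [DecidableEq F]
    (hodd : Odd (Fintype.card F)) (χ : MulChar F ℂ) (hχ : χ ≠ 1)
    (P : Polynomial F) (hP : P ≠ 0)
    (hsum : ∑ x : F, χ (x * P.eval x) = 0)
    (hχn : χ ^ (P.natDegree + 1) ≠ 1) :
    Matrix.det (Matrix.of fun a b : F =>
        χ (∑ s ∈ Finset.range (P.natDegree + 1),
            P.coeff s * a ^ (P.natDegree - s) * b ^ s)) = 0 :=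
  stmt_11_general F χ P hsum hχn
end
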